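/- Let Q be a nonzero real symmetric traceless 3×3 matrix. Then 6 (tr(Q³))² = (tr(Q²))³ (i.e. the biaxiality parameter β = 1 − 6(tr(Q³))²/(tr(Q²))³ equals 0) if and only if Q has a repeated eigenvalue, i.e. Q is uniaxial: Q = s(v⊗v − (1/3)I) for some s ∈ ℝ \ {0} and some unit vector v ∈ ℝ³. -/
import Mathlib


open Matrix

private lemma biax_mem_three {i j k : Fin 3} (hij : i ≠ j) (hik : i ≠ k) (hjk : j ≠ k)
    (m : Fin 3) : m = i ∨ m = j ∨ m = k := by
  have huniv : ({i, j, k} : Finset (Fin 3)) = Finset.univ := by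
    apply Finset.eq_univ_of_card
    rw [Finset.card_insert_of_notMem (by simp [hij, hik]),
      Finset.card_insert_of_notMem (by simp [hjk]), Finset.card_singleton]
    rfl
  have : m ∈ ({i, j, k} : Finset (Fin 3)) := huniv ▸ Finset.mem_univ m
  simpa using this

private lemma biax_uniaxial_of (U : Matrix (Fin 3) (Fin 3) ℝ)
    (hU1 : star U * U = 1) (hU2 : U * star U = 1)
    (d : Fin 3 → ℝ) (i j k : Fin 3) (hij : i ≠ j) (hik : i ≠ k) (hjk : j ≠ k)
    (hd : d i = d j) (hs : d k ≠ d i) (hsum : ∑ m, d m = 0) :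
    ∃ s : ℝ, s ≠ 0 ∧ ∃ v : Fin 3 → ℝ, (∑ m : Fin 3, (v m)^2 = 1) ∧
      U * diagonal d * star U
        = s • (vecMulVec v v - (1/3 : ℝ) • (1 : Matrix (Fin 3) (Fin 3) ℝ)) := by
  have hmem := biax_mem_three hij hik hjk
  have hsum3 : d i + d j + d k = 0 := by
    rw [← hsum]
    have huniv : ({i, j, k} : Finset (Fin 3)) = Finset.univ := by
      apply Finset.eq_univ_of_card
      rw [Finset.card_insert_of_notMem (by simp [hij, hik]),
        Finset.card_insert_of_notMem (by simp [hjk]), Finset.card_singleton]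
      rfl
    rw [← huniv, Finset.sum_insert (by simp [hij, hik]),
      Finset.sum_insert (by simp [hjk]), Finset.sum_singleton, add_assoc]
  refine ⟨d k - d i, sub_ne_zero.mpr hs, fun m => U m k, ?_, ?_⟩
  · have h1 := congrFun (congrFun hU1 k) k
    simpa [Matrix.mul_apply, Matrix.star_apply, Matrix.one_apply, pow_two] using h1
  · have hdiag : diagonal d
        = d i • (1 : Matrix (Fin 3) (Fin 3) ℝ) + (d k - d i) • diagonal (Pi.single k (1:ℝ)) := by
      ext m n
      rcases eq_or_ne m n with rfl | hmn
      · rcases hmem m with rfl | rfl | rfl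
        · simp [Matrix.diagonal_apply, Pi.single_apply, hik.symm ∘ Eq.symm, hik]
        · simp [Matrix.diagonal_apply, Pi.single_apply, hjk, hd]
        · simp [Matrix.diagonal_apply, Pi.single_apply]
      · simp [Matrix.diagonal_apply, hmn, Matrix.one_apply, hmn]
    have hkey : U * diagonal (Pi.single k (1:ℝ)) * star U
        = vecMulVec (fun m => U m k) (fun m => U m k) := by
      ext m n
      rw [Matrix.mul_apply, Matrix.vecMulVec_apply]
      rw [Finset.sum_eq_single k]
      · simp [Matrix.mul_diagonal, Matrix.star_apply]
      · intro p _ hp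
        simp [Matrix.mul_diagonal, Pi.single_apply, hp]
      · simp
    rw [hdiag]
    simp only [Matrix.mul_add, Matrix.add_mul, Matrix.mul_smul, Matrix.smul_mul,
      Matrix.mul_one, hU2, hkey]
    rw [smul_sub, smul_smul,
      show (d k - d i) * (1/3) = -(d i) by linarith, neg_smul, sub_neg_eq_add, add_comm]

private lemma biax_cube_iff (a b c : ℝ) (h : a + b + c = 0) :
    6*(a^3+b^3+c^3)^2 = (a^2+b^2+c^2)^3 ↔ (a-b)*((b-c)*(a-c)) = 0 := by
  have hc : c = -a - b := by linarith
  subst hc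
  constructor
  · intro H
    have h2 : ((a-b)*((b-(-a-b))*(a-(-a-b))))^2 = 0 := by linear_combination (-1/2 : ℝ) * H
    exact pow_eq_zero_iff two_ne_zero |>.mp h2
  · intro H
    have h2 : ((a-b)*((b-(-a-b))*(a-(-a-b))))^2 = 0 := by rw [H]; ring
    linear_combination (-2 : ℝ) * h2

private lemma biax_conj_trace (U M : Matrix (Fin 3) (Fin 3) ℝ) (h : star U * U = 1) :
    (U * M * star U).trace = M.trace := by
  rw [trace_mul_cycle, h, one_mul]

/-- For a nonzero real symmetric traceless 3×3 matrix `Q`, the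
biaxiality parameter vanishes, i.e. `6(tr Q³)² = (tr Q²)³`, if and only if `Q` is
uniaxial: `Q = s(v⊗v − (1/3)I)` for some `s ≠ 0` and a unit vector `v ∈ ℝ³`. -/
theorem biaxiality_zero_iff_uniaxial
    (Q : Matrix (Fin 3) (Fin 3) ℝ) (hsym : Q.IsSymm) (htr : Q.trace = 0) (hQ : Q ≠ 0) :
    6 * ((Q * Q * Q).trace)^2 = ((Q * Q).trace)^3 ↔
    ∃ s : ℝ, s ≠ 0 ∧ ∃ v : Fin 3 → ℝ, (∑ i : Fin 3, (v i)^2 = 1) ∧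
      Q = s • (vecMulVec v v - (1/3 : ℝ) • (1 : Matrix (Fin 3) (Fin 3) ℝ)) := by
  have hA : Q.IsHermitian := by
    rw [IsHermitian, conjTranspose_eq_transpose_of_trivial]; exact hsym
  set U : Matrix (Fin 3) (Fin 3) ℝ := (hA.eigenvectorUnitary : Matrix (Fin 3) (Fin 3) ℝ) with hUdef
  set d : Fin 3 → ℝ := hA.eigenvalues with hddef
  have hU1 : star U * U = 1 := mem_unitaryGroup_iff'.mp hA.eigenvectorUnitary.2
  have hU2 : U * star U = 1 := mem_unitaryGroup_iff.mp hA.eigenvectorUnitary.2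
  have hspec : Q = U * diagonal d * star U := by
    simpa using hA.spectral_theorem
  have htrd : d 0 + d 1 + d 2 = 0 := by
    have h0 : (diagonal d).trace = 0 := by
      rw [← biax_conj_trace U _ hU1, ← hspec]; exact htr
    rw [trace_diagonal, Fin.sum_univ_three] at h0
    exact h0
  have h2 : (Q * Q).trace = (d 0)^2 + (d 1)^2 + (d 2)^2 := by
    rw [hspec]
    have : (U * diagonal d * star U) * (U * diagonal d * star U)
        = U * (diagonal d * diagonal d) * star U := by
      simp only [mul_assoc]
      rw [← mul_assoc (star U) U, hU1, one_mul]
    rw [this, biax_conj_trace _ _ hU1, diagonal_mul_diagonal, trace_diagonal,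
      Fin.sum_univ_three]
    ring
  have h3 : (Q * Q * Q).trace = (d 0)^3 + (d 1)^3 + (d 2)^3 := by
    rw [hspec]
    have : (U * diagonal d * star U) * (U * diagonal d * star U) * (U * diagonal d * star U)
        = U * (diagonal d * (diagonal d * diagonal d)) * star U := by
      simp only [mul_assoc]
      rw [← mul_assoc (star U) U, hU1, one_mul, ← mul_assoc (star U) U, hU1, one_mul]
    rw [this, biax_conj_trace _ _ hU1, diagonal_mul_diagonal, diagonal_mul_diagonal,
      trace_diagonal, Fin.sum_univ_three]
    ring
  constructor
  · intro H
    rw [h2, h3] at H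
    have hprod := (biax_cube_iff (d 0) (d 1) (d 2) htrd).mp H
    have hall : ¬ (d 0 = d 1 ∧ d 1 = d 2) := by
      rintro ⟨h01, h12⟩
      apply hQ
      have hd0 : d 0 = 0 := by linarith
      have hd1 : d 1 = 0 := by linarith
      have hd2 : d 2 = 0 := by linarith
      have hz : d = 0 := by
        funext m; fin_cases m <;> simp [hd0, hd1, hd2]
      have hdz : diagonal d = 0 := by rw [hz]; exact diagonal_zero
      rw [hspec, hdz, Matrix.mul_zero, Matrix.zero_mul]
    have hsumd : ∑ m, d m = 0 := by rw [Fin.sum_univ_three]; exact htrd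
    rcases mul_eq_zero.mp hprod with h01 | hbc
    · have h01 : d 0 = d 1 := by linarith [sub_eq_zero.mp h01]
      have hne : d 2 ≠ d 0 := by
        intro h20
        exact hall ⟨h01, by rw [← h01, h20]⟩
      obtain ⟨s, hs, v, hv, heq⟩ := biax_uniaxial_of U hU1 hU2 d 0 1 2
        (by decide) (by decide) (by decide) h01 hne hsumd
      exact ⟨s, hs, v, hv, by rw [hspec]; exact heq⟩
    · rcases mul_eq_zero.mp hbc with h12 | h02
      · have h12 : d 1 = d 2 := by linarith [sub_eq_zero.mp h12]
        have hne : d 0 ≠ d 1 := by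
          intro h01
          exact hall ⟨h01, h12⟩
        obtain ⟨s, hs, v, hv, heq⟩ := biax_uniaxial_of U hU1 hU2 d 1 2 0
          (by decide) (by decide) (by decide) h12 hne hsumd
        exact ⟨s, hs, v, hv, by rw [hspec]; exact heq⟩
      · have h02 : d 0 = d 2 := by linarith [sub_eq_zero.mp h02]
        have hne : d 1 ≠ d 0 := by
          intro h10
          exact hall ⟨h10.symm, by rw [h10, h02]⟩
        obtain ⟨s, hs, v, hv, heq⟩ := biax_uniaxial_of U hU1 hU2 d 0 2 1
          (by decide) (by decide) (by decide) h02 hne hsumd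
        exact ⟨s, hs, v, hv, by rw [hspec]; exact heq⟩
  · rintro ⟨s, hs, v, hv, rfl⟩
    rw [Fin.sum_univ_three] at hv
    have A : ((s • (vecMulVec v v - (1/3 : ℝ) • (1 : Matrix (Fin 3) (Fin 3) ℝ))) *
        (s • (vecMulVec v v - (1/3 : ℝ) • (1 : Matrix (Fin 3) (Fin 3) ℝ)))).trace
        = 2/3 * s^2 := by
      simp only [Matrix.trace, Matrix.diag_apply, Matrix.mul_apply, Fin.sum_univ_three,
        Matrix.smul_apply, Matrix.sub_apply, Matrix.vecMulVec_apply, Matrix.one_apply,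
        smul_eq_mul]
      norm_num [Fin.ext_iff]
      linear_combination (s^2 * ((v 0)^2 + (v 1)^2 + (v 2)^2 + 1/3)) * hv
    have B : ((s • (vecMulVec v v - (1/3 : ℝ) • (1 : Matrix (Fin 3) (Fin 3) ℝ))) *
        (s • (vecMulVec v v - (1/3 : ℝ) • (1 : Matrix (Fin 3) (Fin 3) ℝ))) *
        (s • (vecMulVec v v - (1/3 : ℝ) • (1 : Matrix (Fin 3) (Fin 3) ℝ)))).trace
        = 2/9 * s^3 := by
      simp only [Matrix.trace, Matrix.diag_apply, Matrix.mul_apply, Fin.sum_univ_three,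
        Matrix.smul_apply, Matrix.sub_apply, Matrix.vecMulVec_apply, Matrix.one_apply,
        smul_eq_mul]
      norm_num [Fin.ext_iff]
      linear_combination (s^3 * (((v 0)^2 + (v 1)^2 + (v 2)^2)^2 + 1/3)) * hv
    rw [A, B]
    ring
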